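/- Let X be an integrable real-valued random variable on a probability space (Ω,𝒜,P) and let α ∈ (0,1) be fixed. Then for every s ∈ [x_{(α)}, x^{(α)}], ES_α(X) = −α⁻¹·( E[X·1_{X < s}] + s·(α − P[X < s]) ), where the indicator now uses the strict inequality X < s. -/

import Mathlib

/-!
Write `F` for the distribution function of `X` and `q` for the lower `α`-quantile. Right
continuity of `F` gives `α ≤ F q`, and since `F ≤ α` strictly below the upper quantile,
`P[X < s] = F(s-) ≤ α`. If `s = q`, passing from `{X ≤ q}` to `{X < q}` removes the atom `{X = q}`
from both the integral and the probability, and the two contributions `q · P[X = q]` cancel.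
If `q < s`, then `α ≤ F q ≤ P[X < s] ≤ α`, so both correction terms vanish and `{X ≤ q}` and
`{X < s}` differ by a null set.
-/

open MeasureTheory ProbabilityTheory Filter
open scoped Classical

noncomputable section

variable {Ω : Type*} [MeasurableSpace Ω]

/-- Lower α-quantile: inf {x | P[X ≤ x] ≥ α}. -/
def lowerQuantile (P : Measure Ω) (X : Ω → ℝ) (α : ℝ) : ℝ :=
  sInf {x : ℝ | α ≤ (P {ω | X ω ≤ x}).toReal}

/-- Upper α-quantile: inf {x | P[X ≤ x] > α}. -/
def upperQuantile (P : Measure Ω) (X : Ω → ℝ) (α : ℝ) : ℝ :=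
  sInf {x : ℝ | α < (P {ω | X ω ≤ x}).toReal}

/-- α-tail mean. -/
def tailMean (P : Measure Ω) (X : Ω → ℝ) (α : ℝ) : ℝ :=
  α⁻¹ * ((∫ ω in {ω | X ω ≤ lowerQuantile P X α}, X ω ∂P)
    + lowerQuantile P X α * (α - (P {ω | X ω ≤ lowerQuantile P X α}).toReal))

/-- Expected Shortfall. -/
def ES (P : Measure Ω) (X : Ω → ℝ) (α : ℝ) : ℝ := - tailMean P X α

/-- Conditional expectation given an event: E[X | A] = E[X·1_A] / P[A]. -/
def condExpEvent (P : Measure Ω) (X : Ω → ℝ) (A : Set Ω) : ℝ :=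
  (∫ ω in A, X ω ∂P) / (P A).toReal

/-- Lower tail conditional expectation. -/
def TCElow (P : Measure Ω) (X : Ω → ℝ) (α : ℝ) : ℝ :=
  - condExpEvent P X {ω | X ω ≤ lowerQuantile P X α}

/-- Upper tail conditional expectation. -/
def TCEup (P : Measure Ω) (X : Ω → ℝ) (α : ℝ) : ℝ :=
  - condExpEvent P X {ω | X ω ≤ upperQuantile P X α}

/-- Worst conditional expectation. -/
def WCE (P : Measure Ω) (X : Ω → ℝ) (α : ℝ) : ℝ :=
  - sInf {y : ℝ | ∃ A : Set Ω, MeasurableSet A ∧ α < (P A).toReal ∧ y = condExpEvent P X A}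

/-- Conditional value-at-risk. -/
def CVaR (P : Measure Ω) (X : Ω → ℝ) (α : ℝ) : ℝ :=
  sInf {y : ℝ | ∃ s : ℝ, y = (∫ ω, max (-(X ω - s)) 0 ∂P) / α - s}

/-- Modified indicator 1^{(α)}_{X ≤ x}. -/
def modInd (P : Measure Ω) (X : Ω → ℝ) (α x : ℝ) (ω : Ω) : ℝ :=
  if P {a | X a = x} = 0 then Set.indicator {a | X a ≤ x} (fun _ => (1 : ℝ)) ω
  else Set.indicator {a | X a ≤ x} (fun _ => (1 : ℝ)) ω
    + ((α - (P {a | X a ≤ x}).toReal) / (P {a | X a = x}).toReal)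
      * Set.indicator {a | X a = x} (fun _ => (1 : ℝ)) ω

/-- Sum of the k smallest entries of (X 0 ω, ..., X (n-1) ω). -/
def tailSum (Xs : ℕ → Ω → ℝ) (n k : ℕ) (ω : Ω) : ℝ :=
  ((List.insertionSort (· ≤ ·) (List.ofFn fun i : Fin n => Xs i ω)).take k).sum

open Set

namespace ProbabilityTheory

variable {μ : Measure ℝ} {α : ℝ}

lemma bddBelow_setOf_le_cdf (hα : 0 < α) : BddBelow {x | α ≤ cdf μ x} := by
  obtain ⟨x₀, hx₀⟩ := eventually_atBot.1 ((tendsto_cdf_atBot μ).eventually (gt_mem_nhds hα))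
  exact ⟨x₀, fun y hy => not_lt.1 fun hlt => (hx₀ y hlt.le).not_ge hy⟩

lemma nonempty_setOf_le_cdf (hα : α < 1) : {x | α ≤ cdf μ x}.Nonempty :=
  ((tendsto_cdf_atTop μ).eventually (lt_mem_nhds hα)).exists.imp fun _ hx => hx.le

lemma le_cdf_sInf_setOf_le_cdf (hα : α ∈ Ioo 0 1) : α ≤ cdf μ (sInf {x | α ≤ cdf μ x}) := by
  set q := sInf {x | α ≤ cdf μ x}
  have h_above : ∀ x ∈ Ioi q, α ≤ cdf μ x := fun x hx => by
    obtain ⟨y, hy, hyx⟩ := exists_lt_of_csInf_lt (nonempty_setOf_le_cdf hα.2) hx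
    exact hy.trans (monotone_cdf μ hyx.le)
  exact ge_of_tendsto ((cdf μ).right_continuous q |>.mono Ioi_subset_Ici_self)
    (eventually_nhdsWithin_of_forall h_above)

lemma leftLim_cdf_le_of_le_sInf_setOf_lt_cdf (hα : 0 < α) {s : ℝ}
    (hs : s ≤ sInf {x | α < cdf μ x}) : Function.leftLim (cdf μ) s ≤ α := by
  have hbdd : BddBelow {x | α < cdf μ x} :=
    (bddBelow_setOf_le_cdf (μ := μ) hα).mono fun x (hx : α < cdf μ x) => hx.le
  refine le_of_tendsto ((monotone_cdf μ).tendsto_leftLim s) (eventually_nhdsWithin_of_forall ?_)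
  exact fun c hc => not_lt.1 fun hlt => notMem_of_lt_csInf (hc.trans_le hs) hbdd hlt

lemma measure_Iio_toReal_eq_leftLim_cdf [IsProbabilityMeasure μ] (x : ℝ) :
    (μ (Iio x)).toReal = Function.leftLim (cdf μ) x := by
  have h := (cdf μ).measure_Iio (tendsto_cdf_atBot μ) x
  rw [measure_cdf, sub_zero] at h
  rw [h, ENNReal.toReal_ofReal]
  exact (cdf_nonneg μ (x - 1)).trans ((monotone_cdf μ).le_leftLim (sub_one_lt x))

end ProbabilityTheory

section RandomVariable

variable {P : Measure Ω} [IsProbabilityMeasure P] {X : Ω → ℝ}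

lemma measure_setOf_le_toReal_eq_cdf_map (hX : Measurable X) (x : ℝ) :
    (P {ω | X ω ≤ x}).toReal = cdf (P.map X) x := by
  have := Measure.isProbabilityMeasure_map (μ := P) hX.aemeasurable
  rw [cdf_eq_real, measureReal_def, Measure.map_apply hX measurableSet_Iic]
  rfl

lemma measure_setOf_lt_toReal_eq_leftLim_cdf_map (hX : Measurable X) (x : ℝ) :
    (P {ω | X ω < x}).toReal = Function.leftLim (cdf (P.map X)) x := by
  have := Measure.isProbabilityMeasure_map (μ := P) hX.aemeasurable
  rw [← measure_Iio_toReal_eq_leftLim_cdf, Measure.map_apply hX measurableSet_Iio]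
  rfl

lemma lowerQuantile_eq_sInf_cdf_map (hX : Measurable X) (α : ℝ) :
    lowerQuantile P X α = sInf {x | α ≤ cdf (P.map X) x} := by
  simp only [lowerQuantile, measure_setOf_le_toReal_eq_cdf_map hX]

lemma upperQuantile_eq_sInf_cdf_map (hX : Measurable X) (α : ℝ) :
    upperQuantile P X α = sInf {x | α < cdf (P.map X) x} := by
  simp only [upperQuantile, measure_setOf_le_toReal_eq_cdf_map hX]

lemma le_measure_setOf_le_lowerQuantile (hX : Measurable X) {α : ℝ} (hα : α ∈ Ioo 0 1) :
    α ≤ (P {ω | X ω ≤ lowerQuantile P X α}).toReal := by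
  rw [measure_setOf_le_toReal_eq_cdf_map hX, lowerQuantile_eq_sInf_cdf_map hX]
  exact le_cdf_sInf_setOf_le_cdf hα

lemma measure_setOf_lt_le_of_le_upperQuantile (hX : Measurable X) {α s : ℝ} (hα : 0 < α)
    (hs : s ≤ upperQuantile P X α) : (P {ω | X ω < s}).toReal ≤ α := by
  rw [measure_setOf_lt_toReal_eq_leftLim_cdf_map hX]
  exact leftLim_cdf_le_of_le_sInf_setOf_lt_cdf hα
    (hs.trans_eq (upperQuantile_eq_sInf_cdf_map hX α))

end RandomVariable

lemma setIntegral_le_add_eq_setIntegral_lt_add {P : Measure Ω} [IsFiniteMeasure P] {X : Ω → ℝ}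
    (hX : Measurable X) (hXint : Integrable X P) (α s : ℝ) :
    (∫ ω in {ω | X ω ≤ s}, X ω ∂P) + s * (α - (P {ω | X ω ≤ s}).toReal)
      = (∫ ω in {ω | X ω < s}, X ω ∂P) + s * (α - (P {ω | X ω < s}).toReal) := by
  have hdisj : Disjoint {ω | X ω < s} {ω | X ω = s} :=
    disjoint_left.2 fun _ hlt heq => hlt.ne heq
  have hunion : {ω | X ω ≤ s} = {ω | X ω < s} ∪ {ω | X ω = s} := by
    ext ω; simp [le_iff_lt_or_eq]
  have hatom : MeasurableSet {ω | X ω = s} := hX (measurableSet_singleton s)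
  have hint_atom : ∫ ω in {ω | X ω = s}, X ω ∂P = s * (P {ω | X ω = s}).toReal := by
    rw [setIntegral_congr_fun hatom (g := fun _ => s) fun _ hω => hω, setIntegral_const,
      smul_eq_mul, measureReal_def, mul_comm]
  rw [hunion, setIntegral_union hdisj hatom hXint.integrableOn hXint.integrableOn, hint_atom,
    measure_union hdisj hatom, ENNReal.toReal_add (measure_ne_top _ _) (measure_ne_top _ _)]
  ring

/-- Representation of ES with any s in the quantile interval
(strict indicator). -/
theorem es_representation_lt (P : Measure Ω) [IsProbabilityMeasure P] (α : ℝ)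
    (hα : α ∈ Set.Ioo (0:ℝ) 1)
    (X : Ω → ℝ) (hX : Measurable X) (hXint : Integrable X P) :
    ∀ s ∈ Set.Icc (lowerQuantile P X α) (upperQuantile P X α),
      ES P X α = - (α⁻¹ * ((∫ ω in {ω | X ω < s}, X ω ∂P)
        + s * (α - (P {ω | X ω < s}).toReal))) := by
  rintro s ⟨hqs, hsu⟩
  rw [ES, tailMean, neg_inj]
  congr 1
  have hFq := le_measure_setOf_le_lowerQuantile (P := P) hX hα
  have hFs := measure_setOf_lt_le_of_le_upperQuantile (P := P) hX hα.1 hsu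
  set q := lowerQuantile P X α
  rcases hqs.eq_or_lt with rfl | hlt
  · exact setIntegral_le_add_eq_setIntegral_lt_add hX hXint α q
  have hsub : {ω | X ω ≤ q} ⊆ {ω | X ω < s} := fun _ hω => hω.trans_lt hlt
  have hmono := ENNReal.toReal_mono (measure_ne_top _ _) (measure_mono (μ := P) hsub)
  have hae : {ω | X ω ≤ q} =ᵐ[P] {ω | X ω < s} :=
    ae_eq_of_subset_of_measure_ge hsub
      ((ENNReal.toReal_le_toReal (measure_ne_top _ _) (measure_ne_top _ _)).1 (hFs.trans hFq))
      (measurableSet_le hX measurable_const).nullMeasurableSet (measure_ne_top _ _)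
  rw [setIntegral_congr_set hae, le_antisymm (hmono.trans hFs) hFq,
    le_antisymm hFs (hFq.trans hmono), sub_self, mul_zero, mul_zero]

end
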